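/- Let p be a point in the closed disc of radius a centered at (4a,0), and consider any closed disc D centered at p whose radius equals the distance from p to the boundary of [−5a,5a]^2 ∪ [5a,15a]×[−5a,5a]. Then D contains the closed disc of radius a centered at (6a,0) (the 'left disc' of the neighboring tile). -/

import Mathlib

open Metric

noncomputable abbrev pt (x y : ℝ) : EuclideanSpace ℝ (Fin 2) := WithLp.toLp 2 ![x, y]

/-- The tile `t = [−5a,5a]²`. -/
def tileT (a : ℝ) : Set (EuclideanSpace ℝ (Fin 2)) :=
  {p | p 0 ∈ Set.Icc (-(5*a)) (5*a) ∧ p 1 ∈ Set.Icc (-(5*a)) (5*a)}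

/-- The right neighbouring tile `t_r = [5a,15a] × [−5a,5a]`. -/
def tileTr (a : ℝ) : Set (EuclideanSpace ℝ (Fin 2)) :=
  {p | p 0 ∈ Set.Icc (5*a) (15*a) ∧ p 1 ∈ Set.Icc (-(5*a)) (5*a)}

/-! Around `p`, whose coordinates are within `a` of `(4a, 0)`, the ball of radius `4a` stays in
the rectangle `[−5a,15a] × [−5a,5a] = t ∪ t_r`, so the distance from `p` to the boundary is at
least `4a`. The centre `(6a,0)` is within `3a` of `p`, hence the disc of radius `a` about it lies
in the disc of radius `4a` about `p`. -/

theorem Metric.le_infDist_compl_of_ball_subset {α : Type*} [PseudoMetricSpace α] {x : α} {r : ℝ}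
    {s : Set α} (hs : s ≠ Set.univ) (h : ball x r ⊆ s) : r ≤ infDist x sᶜ :=
  (le_infDist (Set.nonempty_compl.2 hs)).2 fun _ hy ↦
    not_lt.1 fun hlt ↦ hy (h (mem_ball'.2 hlt))

lemma EuclideanSpace.abs_sub_apply_le_dist {ι : Type*} [Fintype ι] (x y : EuclideanSpace ℝ ι)
    (i : ι) :
    |x i - y i| ≤ dist x y :=
  (Real.dist_eq _ _).symm.trans_le (PiLp.dist_apply_le x y i)

lemma dist_pt_pt_of_snd_eq (x x' y : ℝ) : dist (pt x y) (pt x' y) = |x - x'| := by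
  rw [EuclideanSpace.dist_eq, Fin.sum_univ_two]
  simp [Real.dist_eq, Real.sqrt_sq_eq_abs]

lemma tileT_union_tileTr_ne_univ {a : ℝ} (ha : 0 < a) : tileT a ∪ tileTr a ≠ Set.univ := by
  refine fun h ↦ ?_
  have hmem : pt (20 * a) 0 ∈ tileT a ∪ tileTr a := h ▸ Set.mem_univ _
  simp only [tileT, tileTr, Set.mem_union, Set.mem_ofPred_eq, Set.mem_Icc,
    Matrix.cons_val_zero] at hmem
  rcases hmem with ⟨⟨_, h⟩, _⟩ | ⟨⟨_, h⟩, _⟩ <;> linarith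

lemma ball_subset_tileT_union_tileTr {a : ℝ} {p : EuclideanSpace ℝ (Fin 2)}
    (hp : p ∈ closedBall (pt (4*a) 0) a) : ball p (4*a) ⊆ tileT a ∪ tileTr a := by
  intro y hy
  have hp₀ := abs_le.1 ((EuclideanSpace.abs_sub_apply_le_dist p _ 0).trans hp)
  have hp₁ := abs_le.1 ((EuclideanSpace.abs_sub_apply_le_dist p _ 1).trans hp)
  have hy₀ := abs_lt.1 ((EuclideanSpace.abs_sub_apply_le_dist y p 0).trans_lt hy)
  have hy₁ := abs_lt.1 ((EuclideanSpace.abs_sub_apply_le_dist y p 1).trans_lt hy)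
  simp only [Matrix.cons_val_zero, Matrix.cons_val_one, sub_zero] at hp₀ hp₁
  simp only [tileT, tileTr, Set.mem_union, Set.mem_ofPred_eq, Set.mem_Icc]
  rcases le_total (y 0) (5*a) with h | h
  · left; refine ⟨⟨?_, ?_⟩, ?_, ?_⟩ <;> linarith
  · right; refine ⟨⟨?_, ?_⟩, ?_, ?_⟩ <;> linarith

/-- For `p` in the closed disc of radius `a` about `(4a,0)`, the closed disc
centred at `p` of radius equal to the distance from `p` to the boundary of `t ∪ t_r`
(i.e. `infDist p (t ∪ t_r)ᶜ`) contains the closed disc of radius `a` centred at `(6a,0)`,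
the left disc of the neighbouring tile. -/
theorem maximal_disc_contains_left_disc_of_neighbour (a : ℝ) (ha : 0 < a)
    (p : EuclideanSpace ℝ (Fin 2)) (hp : p ∈ closedBall (pt (4*a) 0) a) :
    closedBall (pt (6*a) 0) a ⊆ closedBall p (Metric.infDist p (tileT a ∪ tileTr a)ᶜ) := by
  have hinf : 4*a ≤ infDist p (tileT a ∪ tileTr a)ᶜ :=
    le_infDist_compl_of_ball_subset (tileT_union_tileTr_ne_univ ha)
      (ball_subset_tileT_union_tileTr hp)
  have hcentres : dist (pt (6*a) 0) p ≤ 3*a := calc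
    dist (pt (6*a) 0) p ≤ dist (pt (6*a) 0) (pt (4*a) 0) + dist (pt (4*a) 0) p :=
      dist_triangle _ _ _
    _ ≤ 2*a + a := by
      rw [dist_pt_pt_of_snd_eq, dist_comm, abs_of_pos (by linarith)]
      linarith [mem_closedBall.1 hp]
    _ = 3*a := by ring
  exact closedBall_subset_closedBall' (by linarith)
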